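/- In Dijkstra's algorithm on a graph with nonnegative edge weights, when a vertex u with minimum tentative distance among unfinalized vertices is extracted, its tentative distance equals the true shortest-path distance from the source. -/

import Mathlib

open scoped ENNReal

/-- The cost of a walk (list of vertices) under edge weights `w`. -/
noncomputable def walkCost {V : Type*} (w : V → V → ℝ≥0∞) : List V → ℝ≥0∞
  | a :: b :: t => w a b + walkCost w (b :: t)
  | _ => 0
termination_by l => l.length

/-- `IsWalk s v p`: the list `p` is a walk from `s` to `v`. -/
def IsWalk {V : Type*} (s v : V) (p : List V) : Prop :=
  p.head? = some s ∧ p.getLast? = some v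

/-!
Every walk from `s` to `u ∉ F` leaves `F`; cut it at the first vertex `v ∉ F`. The cut
prefix has all its interior vertices in `F`, so its cost is at least `d v ≥ d u`, and since
weights are nonnegative the whole walk costs at least as much as the prefix. Conversely,
`d u` is an infimum over a subfamily of the walks defining `dist u`.
-/

theorem List.exists_eq_append_cons_of_exists_not {α : Type*} (P : α → Prop) :
    ∀ {l : List α}, (∃ x ∈ l, ¬ P x) →
      ∃ l₁ a l₂, l = l₁ ++ a :: l₂ ∧ ¬ P a ∧ ∀ y ∈ l₁, P y
  | [], ⟨_, hx, _⟩ => by simp at hx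
  | a :: t, ⟨x, hx, hPx⟩ => by
    by_cases ha : P a
    · have hxt : x ∈ t := (List.mem_cons.1 hx).resolve_left (by rintro rfl; exact hPx ha)
      obtain ⟨l₁, b, l₂, rfl, hb, hl₁⟩ := exists_eq_append_cons_of_exists_not P ⟨x, hxt, hPx⟩
      exact ⟨a :: l₁, b, l₂, rfl, hb, by simpa [ha] using hl₁⟩
    · exact ⟨[], a, t, rfl, ha, by simp⟩

section
variable {V : Type*}

theorem walkCost_cons_cons (w : V → V → ℝ≥0∞) (a b : V) (t : List V) :
    walkCost w (a :: b :: t) = w a b + walkCost w (b :: t) := by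
  rw [walkCost]

theorem walkCost_le_walkCost_append (w : V → V → ℝ≥0∞) :
    ∀ l₁ l₂ : List V, walkCost w l₁ ≤ walkCost w (l₁ ++ l₂)
  | [], _ | [_], _ => by simp [walkCost]
  | a :: b :: t, l₂ => by
    rw [List.cons_append, List.cons_append, walkCost_cons_cons, walkCost_cons_cons]
    gcongr
    exact walkCost_le_walkCost_append w (b :: t) l₂

theorem IsWalk.exists_exit_prefix (w : V → V → ℝ≥0∞) {s v : V} {p : List V} (F : Set V)
    (hp : IsWalk s v p) (hv : v ∉ F) :
    ∃ x q, IsWalk s x (q ++ [x]) ∧ x ∉ F ∧ (∀ y ∈ q, y ∈ F) ∧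
      walkCost w (q ++ [x]) ≤ walkCost w p := by
  obtain ⟨hhead, hlast⟩ := hp
  have hvp : v ∈ p := List.mem_of_getLast? hlast
  obtain ⟨q, x, r, rfl, hx, hqF⟩ := List.exists_eq_append_cons_of_exists_not (· ∈ F) ⟨v, hvp, hv⟩
  refine ⟨x, q, ⟨?_, by simp⟩, hx, hqF, ?_⟩
  · cases q <;> simpa using hhead
  · simpa using walkCost_le_walkCost_append w (q ++ [x]) r

end

theorem stmt10_general {V : Type*} (w : V → V → ℝ≥0∞) (s : V)
    (F : Finset V) (d : V → ℝ≥0∞)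
    (dist : V → ℝ≥0∞)
    (hdist : ∀ v, dist v = ⨅ (p : List V) (_ : IsWalk s v p), walkCost w p)
    (hunfin : ∀ v ∉ F, d v =
      ⨅ (p : List V) (_ : IsWalk s v p ∧ ∀ x ∈ p.dropLast, x ∈ F),
        walkCost w p)
    (u : V) (hu : u ∉ F) (hmin : ∀ v ∉ F, d u ≤ d v) :
    d u = dist u := by
  refine le_antisymm ?_ ?_
  · rw [hdist u]
    refine le_iInf₂ fun p hp => ?_
    obtain ⟨v, q, hq, hv, hqF, hcost⟩ := hp.exists_exit_prefix w (F : Set V) hu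
    calc d u ≤ d v := hmin v hv
      _ ≤ walkCost w (q ++ [v]) := by
        rw [hunfin v hv]
        exact iInf₂_le _ ⟨hq, by simpa using hqF⟩
      _ ≤ walkCost w p := hcost
  · rw [hdist u, hunfin u hu]
    exact le_iInf₂ fun p hp => iInf₂_le p hp.1

/-- Dijkstra's key step: with nonnegative weights, if `d` satisfies the Dijkstra
    invariant with respect to the finalized set `F` (containing the source `s`),
    then an unfinalized vertex `u` minimizing `d` satisfies
    `d u = dist s u`, the true shortest-path distance. -/
theorem stmt10 {V : Type*} [Fintype V] (w : V → V → ℝ≥0∞) (s : V)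
    (F : Finset V) (hs : s ∈ F) (d : V → ℝ≥0∞)
    (dist : V → ℝ≥0∞)
    (hdist : ∀ v, dist v = ⨅ (p : List V) (_ : IsWalk s v p), walkCost w p)
    (hfin : ∀ v ∈ F, d v = dist v)
    (hunfin : ∀ v ∉ F, d v =
      ⨅ (p : List V) (_ : IsWalk s v p ∧ ∀ x ∈ p.dropLast, x ∈ F),
        walkCost w p)
    (u : V) (hu : u ∉ F) (hmin : ∀ v ∉ F, d u ≤ d v) :
    d u = dist u :=
  stmt10_general w s F d dist hdist hunfin u hu hmin
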